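/- Suppose P_l ⪰ 0 for l = 1,…,d, and (x̂, X̂) is an optimal solution of the enhanced semidefinite relaxation satisfying tr(P_0 X̂) ≥ x̂ᵀ P_0 x̂. Then x̂ is feasible for the original problem, the optimal values of the original problem and the relaxation coincide, and tr(P_0 X̂) = x̂ᵀ P_0 x̂. -/

import Mathlib

open Matrix ComplexOrder

/-- Feasibility for the original non-convex quadratic problem \eqref{P}. -/
def OrigFeas {n m d k : ℕ} (P : Fin d → Matrix (Fin n) (Fin n) ℝ)
    (q : Fin d → (Fin n → ℝ)) (r : Fin d → ℝ)
    (A : Matrix (Fin m) (Fin n) ℝ) (b : Fin m → ℝ)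
    (H0 : Matrix (Fin k) (Fin k) ℂ) (H : Fin n → Matrix (Fin k) (Fin k) ℂ)
    (x : Fin n → ℝ) : Prop :=
  (∀ l, x ⬝ᵥ (P l).mulVec x + 2 * (q l ⬝ᵥ x) + r l ≤ 0) ∧
  A.mulVec x = b ∧
  (H0 + ∑ j, x j • H j).PosSemidef

/-- Feasibility for the enhanced semidefinite relaxation \eqref{D3}. -/
def RelaxFeas {n m d k : ℕ} (P : Fin d → Matrix (Fin n) (Fin n) ℝ)
    (q : Fin d → (Fin n → ℝ)) (r : Fin d → ℝ)
    (A : Matrix (Fin m) (Fin n) ℝ) (b : Fin m → ℝ)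
    (H0 : Matrix (Fin k) (Fin k) ℂ) (H : Fin n → Matrix (Fin k) (Fin k) ℂ)
    (x : Fin n → ℝ) (X : Matrix (Fin n) (Fin n) ℝ) : Prop :=
  (∀ l, ((P l) * X).trace + 2 * (q l ⬝ᵥ x) + r l ≤ 0) ∧
  A.mulVec x = b ∧
  A * X = Matrix.vecMulVec b x ∧
  (X - Matrix.vecMulVec x x).PosSemidef ∧
  (H0 + ∑ j, x j • H j).PosSemidef

/-!
Since `P_l ⪰ 0` and `X̂ ⪰ x̂ x̂ᵀ`, `tr(P_l X̂) ≥ x̂ᵀ P_l x̂`, so `x̂` is feasible for the original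
problem. Every original-feasible `y` lifts to the relaxation-feasible `(y, y yᵀ)` with the same
objective value; comparing `(x̂, X̂)` with the lift of `x̂` forces `tr(P₀ X̂) = x̂ᵀ P₀ x̂`, and then
the value at `x̂` is a lower bound for the relaxation attained by the original problem.
-/

namespace Matrix

variable {n : Type*} [Fintype n]

theorem trace_mul_vecMulVec {R : Type*} [CommSemiring R] (M : Matrix n n R) (x y : n → R) :
    (M * vecMulVec x y).trace = y ⬝ᵥ M *ᵥ x := by
  rw [mul_vecMulVec, trace_vecMulVec, dotProduct_comm]

open scoped MatrixOrder in
theorem PosSemidef.trace_mul_nonneg {𝕜 : Type*} [RCLike 𝕜] {M N : Matrix n n 𝕜}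
    (hM : M.PosSemidef) (hN : N.PosSemidef) : 0 ≤ (M * N).trace := by
  classical
  -- write `N = C * C` with `C = √N` Hermitian, so that `tr (M N) = tr (Cᴴ M C)`
  set C := CFC.sqrt N
  have hC : Cᴴ = C := (CFC.sqrt_nonneg N).posSemidef.isHermitian
  calc 0 ≤ (Cᴴ * M * C).trace := (hM.conjTranspose_mul_mul_same C).trace_nonneg
    _ = (M * N).trace := by
      rw [← CFC.sqrt_mul_sqrt_self N hN.nonneg, hC, Matrix.mul_assoc, trace_mul_comm,
        Matrix.mul_assoc]

theorem dotProduct_mulVec_le_trace_mul {M X : Matrix n n ℝ} {x : n → ℝ} (hM : M.PosSemidef)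
    (hX : (X - vecMulVec x x).PosSemidef) : x ⬝ᵥ M *ᵥ x ≤ (M * X).trace := by
  have := hM.trace_mul_nonneg hX
  rwa [Matrix.mul_sub, trace_sub, trace_mul_vecMulVec, sub_nonneg] at this

end Matrix

theorem sInf_image_eq_of_mapsTo_of_le {α σ τ : Type*} [CompleteLattice α] {f : σ → α}
    {g : τ → α} {e : σ → τ} {S : Set σ} {T : Set τ} {s₀ : σ} (he : Set.MapsTo e S T)
    (hge : ∀ s ∈ S, g (e s) ≤ f s) (hs₀ : s₀ ∈ S) (hmin : ∀ t ∈ T, f s₀ ≤ g t) :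
    sInf (f '' S) = sInf (g '' T) :=
  le_antisymm
    ((sInf_le (Set.mem_image_of_mem f hs₀)).trans (le_sInf (Set.forall_mem_image.2 hmin)))
    (le_sInf <| Set.forall_mem_image.2 fun s hs =>
      (sInf_le (Set.mem_image_of_mem g (he hs))).trans (hge s hs))

section Feasibility

variable {n m d k : ℕ} {P : Fin d → Matrix (Fin n) (Fin n) ℝ} {q : Fin d → (Fin n → ℝ)}
  {r : Fin d → ℝ} {A : Matrix (Fin m) (Fin n) ℝ} {b : Fin m → ℝ}
  {H0 : Matrix (Fin k) (Fin k) ℂ} {H : Fin n → Matrix (Fin k) (Fin k) ℂ} {x : Fin n → ℝ}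

theorem RelaxFeas.origFeas {X : Matrix (Fin n) (Fin n) ℝ} (hP : ∀ l, (P l).PosSemidef)
    (h : RelaxFeas P q r A b H0 H x X) : OrigFeas P q r A b H0 H x := by
  obtain ⟨hineq, hAx, -, hX, hLMI⟩ := h
  exact ⟨fun l => by linarith [dotProduct_mulVec_le_trace_mul (hP l) hX, hineq l], hAx, hLMI⟩

theorem OrigFeas.relaxFeas_vecMulVec (h : OrigFeas P q r A b H0 H x) :
    RelaxFeas P q r A b H0 H x (vecMulVec x x) := by
  obtain ⟨hineq, hAx, hLMI⟩ := h
  refine ⟨fun l => ?_, hAx, by rw [mul_vecMulVec, hAx], by simpa using PosSemidef.zero, hLMI⟩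
  rw [trace_mul_vecMulVec]
  exact hineq l

end Feasibility

theorem optimal_relaxation_solves_original_general {n m d k : ℕ}
    (P0 : Matrix (Fin n) (Fin n) ℝ) (P : Fin d → Matrix (Fin n) (Fin n) ℝ)
    (q0 : Fin n → ℝ) (q : Fin d → (Fin n → ℝ)) (r0 : ℝ) (r : Fin d → ℝ)
    (A : Matrix (Fin m) (Fin n) ℝ) (b : Fin m → ℝ)
    (H0 : Matrix (Fin k) (Fin k) ℂ) (H : Fin n → Matrix (Fin k) (Fin k) ℂ)
    (hPsd : ∀ l, (P l).PosSemidef)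
    (xh : Fin n → ℝ) (Xh : Matrix (Fin n) (Fin n) ℝ)
    (hfeas : RelaxFeas P q r A b H0 H xh Xh)
    (hopt : ∀ x X, RelaxFeas P q r A b H0 H x X →
      (P0 * Xh).trace + 2 * (q0 ⬝ᵥ xh) + r0 ≤ (P0 * X).trace + 2 * (q0 ⬝ᵥ x) + r0)
    (hgap : xh ⬝ᵥ P0.mulVec xh ≤ (P0 * Xh).trace) :
    OrigFeas P q r A b H0 H xh ∧
    sInf ((fun y : Fin n → ℝ =>
        ((y ⬝ᵥ P0.mulVec y + 2 * (q0 ⬝ᵥ y) + r0 : ℝ) : EReal)) ''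
        {y | OrigFeas P q r A b H0 H y}) =
    sInf ((fun p : (Fin n → ℝ) × Matrix (Fin n) (Fin n) ℝ =>
        (((P0 * p.2).trace + 2 * (q0 ⬝ᵥ p.1) + r0 : ℝ) : EReal)) ''
        {p | RelaxFeas P q r A b H0 H p.1 p.2}) ∧
    (P0 * Xh).trace = xh ⬝ᵥ P0.mulVec xh := by
  have horig := hfeas.origFeas hPsd
  have htight : (P0 * Xh).trace = xh ⬝ᵥ P0 *ᵥ xh := by
    refine le_antisymm ?_ hgap
    simpa [trace_mul_vecMulVec] using hopt xh _ horig.relaxFeas_vecMulVec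
  refine ⟨horig, sInf_image_eq_of_mapsTo_of_le (e := fun y => (y, vecMulVec y y))
    (fun y hy => hy.relaxFeas_vecMulVec) (fun y _ => by simp [trace_mul_vecMulVec]) horig
    fun p hp => ?_, htight⟩
  exact EReal.coe_le_coe_iff.2 (htight ▸ hopt p.1 p.2 hp)

/-- If all `P l ⪰ 0` and `(x̂, X̂)` is an optimal solution of the enhanced semidefinite
relaxation with `tr(P₀ X̂) ≥ x̂ᵀ P₀ x̂`, then `x̂` is feasible for the original problem,
the optimal values of both problems coincide, and `tr(P₀ X̂) = x̂ᵀ P₀ x̂`. -/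
theorem optimal_relaxation_solves_original {n m d k : ℕ}
    (P0 : Matrix (Fin n) (Fin n) ℝ) (P : Fin d → Matrix (Fin n) (Fin n) ℝ)
    (q0 : Fin n → ℝ) (q : Fin d → (Fin n → ℝ)) (r0 : ℝ) (r : Fin d → ℝ)
    (A : Matrix (Fin m) (Fin n) ℝ) (b : Fin m → ℝ)
    (H0 : Matrix (Fin k) (Fin k) ℂ) (H : Fin n → Matrix (Fin k) (Fin k) ℂ)
    (hP0 : P0.IsSymm) (hPsd : ∀ l, (P l).PosSemidef)
    (hH0 : H0.IsHermitian) (hH : ∀ j, (H j).IsHermitian)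
    (xh : Fin n → ℝ) (Xh : Matrix (Fin n) (Fin n) ℝ)
    (hfeas : RelaxFeas P q r A b H0 H xh Xh)
    (hopt : ∀ x X, RelaxFeas P q r A b H0 H x X →
      (P0 * Xh).trace + 2 * (q0 ⬝ᵥ xh) + r0 ≤ (P0 * X).trace + 2 * (q0 ⬝ᵥ x) + r0)
    (hgap : xh ⬝ᵥ P0.mulVec xh ≤ (P0 * Xh).trace) :
    OrigFeas P q r A b H0 H xh ∧
    sInf ((fun y : Fin n → ℝ =>
        ((y ⬝ᵥ P0.mulVec y + 2 * (q0 ⬝ᵥ y) + r0 : ℝ) : EReal)) ''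
        {y | OrigFeas P q r A b H0 H y}) =
    sInf ((fun p : (Fin n → ℝ) × Matrix (Fin n) (Fin n) ℝ =>
        (((P0 * p.2).trace + 2 * (q0 ⬝ᵥ p.1) + r0 : ℝ) : EReal)) ''
        {p | RelaxFeas P q r A b H0 H p.1 p.2}) ∧
    (P0 * Xh).trace = xh ⬝ᵥ P0.mulVec xh :=
  optimal_relaxation_solves_original_general P0 P q0 q r0 r A b H0 H hPsd xh Xh hfeas hopt hgap
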